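/- Let X be a set with two metrics d and d', let e ∈ X, and let μ be a measure on X defined on a σ-algebra containing all d-closed balls and all d'-closed balls centered at e. Assume there are K, Q, r₀, C > 0 such that μ(B_d(e,r)) = K·r^Q for every r ≥ r₀, and such that |d(e,p) − d'(e,p)| ≤ C / (d(e,p) + d'(e,p)) for every p ∈ X with p ≠ e. Then there exist K' > 0 and r₁ > 0 such that |μ(B_{d'}(e,r)) − K·r^Q| ≤ K'·r^{Q−2} for every r ≥ r₁, where B_d(e,r) and B_{d'}(e,r) denote the closed balls of radius r centered at e for d and d' respectively. -/

import Mathlib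

/-!
Outside the `d`-ball of radius `r` about `e`, or outside the `d'`-ball, `d(e,p) + d'(e,p) ≥ r`, so
the hypothesis gives `|d(e,p) − d'(e,p)| ≤ C/r` there. Hence
`B_d(e, r − C/r) ⊆ B_{d'}(e, r) ⊆ B_d(e, r + C/r)`, and the volume of the middle ball lies between
`K (r ∓ C/r)^Q = K r^Q (1 ∓ C/r²)^Q`, which Bernoulli-type inequalities put within
`O(r^{Q-2})` of `K r^Q`.
-/

open MeasureTheory

lemma nonneg_of_symm_of_triangle {X : Type*} {d : X → X → ℝ}
    (hsymm : ∀ x y, d x y = d y x) (htri : ∀ x y z, d x z ≤ d x y + d y z) (x y : X) :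
    0 ≤ d x y := by
  have hxx := htri x x x
  have hxyx := htri x y x
  rw [hsymm y x] at hxyx
  linarith

lemma abs_sub_le_div_of_le_add {a b C r : ℝ} (hC : 0 ≤ C) (hr : 0 < r)
    (hab : |a - b| ≤ C / (a + b)) (hsum : r ≤ a + b) : |a - b| ≤ C / r :=
  hab.trans (div_le_div_of_nonneg_left hC hr hsum)

section Sublevel

variable {X : Type*} {f g : X → ℝ} {e : X} {C r : ℝ}

lemma setOf_le_sub_div_subset_setOf_le (hf : ∀ p, 0 ≤ f p) (hge : g e = 0) (hC : 0 ≤ C)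
    (hr : 0 < r) (hclose : ∀ p, p ≠ e → |f p - g p| ≤ C / (f p + g p)) :
    {p | f p ≤ r - C / r} ⊆ {p | g p ≤ r} := by
  intro p (hp : f p ≤ r - C / r)
  show g p ≤ r
  rcases eq_or_ne p e with rfl | hpe
  · exact hge ▸ hr.le
  by_contra! hgp
  have hfg := abs_le.1 (abs_sub_le_div_of_le_add hC hr (hclose p hpe) (by linarith [hf p]))
  linarith [hfg.1]

lemma setOf_le_subset_setOf_le_add_div (hg : ∀ p, 0 ≤ g p) (hfe : f e = 0) (hC : 0 ≤ C)
    (hr : 0 < r) (hclose : ∀ p, p ≠ e → |f p - g p| ≤ C / (f p + g p)) :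
    {p | g p ≤ r} ⊆ {p | f p ≤ r + C / r} := by
  intro p (hp : g p ≤ r)
  show f p ≤ r + C / r
  have hCr : 0 ≤ C / r := by positivity
  rcases eq_or_ne p e with rfl | hpe
  · rw [hfe]; linarith
  by_contra! hfp
  have hfg := abs_le.1 (abs_sub_le_div_of_le_add hC hr (hclose p hpe) (by linarith [hg p]))
  linarith [hfg.2]

end Sublevel

lemma toReal_measure_mem_Icc_of_subset {X : Type*} [MeasurableSpace X] {μ : Measure X}
    {s t u : Set X} {a b : ℝ} (hst : s ⊆ t) (htu : t ⊆ u) (hs : μ s = ENNReal.ofReal a)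
    (hu : μ u = ENNReal.ofReal b) (hb : 0 ≤ b) :
    a ≤ (μ t).toReal ∧ (μ t).toReal ≤ b := by
  have hut : μ t ≤ ENNReal.ofReal b := hu ▸ measure_mono htu
  refine ⟨?_, ENNReal.toReal_le_of_le_ofReal hb hut⟩
  rw [← ENNReal.ofReal_le_iff_le_toReal (ne_top_of_le_ne_top ENNReal.ofReal_ne_top hut), ← hs]
  exact measure_mono hst

lemma one_add_pow_le_of_le_one {x : ℝ} (hx0 : 0 ≤ x) (hx1 : x ≤ 1) (n : ℕ) :
    (1 + x) ^ n ≤ 1 + (2 ^ n - 1) * x := by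
  induction n with
  | zero => simp
  | succ n ih =>
    have h2n : (1 : ℝ) ≤ 2 ^ n := one_le_pow₀ one_le_two
    have hx2 : 0 ≤ (2 ^ n - 1) * (x * (1 - x)) := by
      apply mul_nonneg <;> nlinarith
    calc (1 + x) ^ (n + 1) = (1 + x) ^ n * (1 + x) := pow_succ _ _
      _ ≤ (1 + (2 ^ n - 1) * x) * (1 + x) := by gcongr
      _ ≤ 1 + (2 ^ (n + 1) - 1) * x := by rw [pow_succ]; nlinarith

section RpowEstimates

variable {Q x : ℝ} {n : ℕ}

lemma rpow_one_add_le (hx0 : 0 ≤ x) (hx1 : x ≤ 1) (hQn : Q ≤ n) :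
    (1 + x) ^ Q ≤ 1 + 2 ^ n * x :=
  calc (1 + x) ^ Q ≤ (1 + x) ^ (n : ℝ) := Real.rpow_le_rpow_of_exponent_le (by linarith) hQn
    _ = (1 + x) ^ n := Real.rpow_natCast _ _
    _ ≤ 1 + (2 ^ n - 1) * x := one_add_pow_le_of_le_one hx0 hx1 n
    _ ≤ 1 + 2 ^ n * x := by nlinarith

lemma one_sub_mul_le_rpow_one_sub (hx0 : 0 ≤ x) (hx1 : x < 1) (hQn : Q ≤ n) :
    1 - n * x ≤ (1 - x) ^ Q :=
  calc 1 - n * x = 1 + n * (-x) := by ring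
    _ ≤ (1 + -x) ^ n := one_add_mul_le_pow (by linarith) n
    _ = (1 - x) ^ (n : ℝ) := by rw [Real.rpow_natCast, ← sub_eq_add_neg]
    _ ≤ (1 - x) ^ Q := Real.rpow_le_rpow_of_exponent_ge (by linarith) (by linarith) hQn

variable {C r : ℝ}

lemma rpow_sub_two_eq_div (hr : 0 < r) : r ^ (Q - 2) = r ^ Q / r ^ 2 := by
  exact_mod_cast Real.rpow_sub_natCast hr.ne' Q 2

lemma rpow_add_div_le (hr : 0 < r) (hC : 0 ≤ C) (hCr : C ≤ r ^ 2) (hQn : Q ≤ n) :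
    (r + C / r) ^ Q ≤ r ^ Q + 2 ^ n * C * r ^ (Q - 2) := by
  have hsplit : r + C / r = r * (1 + C / r ^ 2) := by field_simp
  rw [hsplit, Real.mul_rpow hr.le (by positivity), rpow_sub_two_eq_div hr]
  calc r ^ Q * (1 + C / r ^ 2) ^ Q ≤ r ^ Q * (1 + 2 ^ n * (C / r ^ 2)) := by
        gcongr
        exact rpow_one_add_le (by positivity) ((div_le_one (by positivity)).2 hCr) hQn
    _ = r ^ Q + 2 ^ n * C * (r ^ Q / r ^ 2) := by ring

lemma rpow_sub_mul_le_rpow_sub_div (hr : 0 < r) (hC : 0 ≤ C) (hCr : C < r ^ 2) (hQn : Q ≤ n) :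
    r ^ Q - n * C * r ^ (Q - 2) ≤ (r - C / r) ^ Q := by
  have hsplit : r - C / r = r * (1 - C / r ^ 2) := by field_simp
  have hx1 : C / r ^ 2 < 1 := (div_lt_one (by positivity)).2 hCr
  rw [hsplit, Real.mul_rpow hr.le (by linarith), rpow_sub_two_eq_div hr]
  calc r ^ Q - n * C * (r ^ Q / r ^ 2) = r ^ Q * (1 - n * (C / r ^ 2)) := by ring
    _ ≤ r ^ Q * (1 - C / r ^ 2) ^ Q := by
        gcongr
        exact one_sub_mul_le_rpow_one_sub (by positivity) hx1 hQn

end RpowEstimates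

theorem stmt_12 {X : Type*} [MeasurableSpace X] (d d' : X → X → ℝ) (e : X)
    -- `d` is a metric on `X`
    (hd_eq : ∀ x y : X, d x y = 0 ↔ x = y)
    (hd_symm : ∀ x y : X, d x y = d y x)
    (hd_tri : ∀ x y z : X, d x z ≤ d x y + d y z)
    -- `d'` is a metric on `X`
    (hd'_eq : ∀ x y : X, d' x y = 0 ↔ x = y)
    (hd'_symm : ∀ x y : X, d' x y = d' y x)
    (hd'_tri : ∀ x y z : X, d' x z ≤ d' x y + d' y z)
    (μ : Measure X)
    (K Q r₀ C : ℝ) (hK : 0 < K) (hC : 0 < C)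
    (hvol : ∀ r : ℝ, r₀ ≤ r → μ {p : X | d e p ≤ r} = ENNReal.ofReal (K * r ^ Q))
    (hclose : ∀ p : X, p ≠ e → |d e p - d' e p| ≤ C / (d e p + d' e p)) :
    ∃ K' > (0:ℝ), ∃ r₁ > (0:ℝ), ∀ r : ℝ, r₁ ≤ r →
      |(μ {p : X | d' e p ≤ r}).toReal - K * r ^ Q| ≤ K' * r ^ (Q - 2) := by
  set n := ⌈Q⌉₊
  refine ⟨K * 2 ^ n * C, by positivity, max r₀ 1 + C, by positivity, fun r hr => ?_⟩
  have hr1 : 1 + C ≤ r := by linarith [le_max_right r₀ 1]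
  have hr_pos : 0 < r := by linarith
  have hCr : C / r ≤ C := div_le_self hC.le (by linarith)
  have hCr2 : C < r ^ 2 :=
    (show C < r by linarith).trans_le (le_self_pow₀ (by linarith) two_ne_zero)
  obtain ⟨hlow, hup⟩ := toReal_measure_mem_Icc_of_subset (μ := μ)
    (setOf_le_sub_div_subset_setOf_le (nonneg_of_symm_of_triangle hd_symm hd_tri e)
      ((hd'_eq e e).2 rfl) hC.le hr_pos hclose)
    (setOf_le_subset_setOf_le_add_div (nonneg_of_symm_of_triangle hd'_symm hd'_tri e)
      ((hd_eq e e).2 rfl) hC.le hr_pos hclose)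
    (hvol _ (by linarith [le_max_left r₀ 1]))
    (hvol _ (by linarith [le_max_left r₀ 1, div_nonneg hC.le hr_pos.le]))
    (by positivity)
  have hQn : Q ≤ n := Nat.le_ceil Q
  have hn : K * (n * C * r ^ (Q - 2)) ≤ K * (2 ^ n * C * r ^ (Q - 2)) := by
    gcongr
    exact_mod_cast n.lt_two_pow_self.le
  have hupper := mul_le_mul_of_nonneg_left (rpow_add_div_le hr_pos hC.le hCr2.le hQn) hK.le
  have hlower := mul_le_mul_of_nonneg_left (rpow_sub_mul_le_rpow_sub_div hr_pos hC.le hCr2 hQn) hK.le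
  rw [abs_le]
  constructor <;> linarith
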